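/- arXiv:1404.4886 — 2 statements merged into one kernel-verified Lean document; each statement's English description precedes it below -/
import Mathlib

section
/- The order parameter c_1(d) of the von Mises–Fisher distribution satisfies 0 < c_1(d) < 1 for every d > 0. -/
/-!
Write `c₁ = I / Z` with `Z = ∫ e^{⟪ω, Ω⟫/d}` and `I = ∫ e^{⟪ω, Ω⟫/d} ⟪ω, Ω⟫`. Since surface
measure charges every open set, the integral of a continuous nonnegative function that is
nonzero somewhere is positive. This gives `Z - I = ∫ e^{⟪ω, Ω⟫/d} (1 - ⟪ω, Ω⟫) > 0`, the
integrand being nonzero at `-Ω`. Splitting `e^t = cosh t + sinh t`, the cosh part of `I`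
vanishes by antipodal symmetry of surface measure, and the sinh part is the integral of
`sinh (⟪ω, Ω⟫/d) ⟪ω, Ω⟫ ≥ 0`, which is nonzero at `Ω`.
-/

open scoped RealInnerProductSpace
open MeasureTheory

noncomputable def sphμ (n : ℕ) :
    Measure (Metric.sphere (0 : EuclideanSpace ℝ (Fin n)) 1) :=
  (volume : Measure (EuclideanSpace ℝ (Fin n))).toSphere

noncomputable def VMF (n : ℕ) (d : ℝ) (Ω ω : EuclideanSpace ℝ (Fin n)) : ℝ :=
  (∫ w : Metric.sphere (0 : EuclideanSpace ℝ (Fin n)) 1,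
      Real.exp (⟪(w : EuclideanSpace ℝ (Fin n)), Ω⟫ / d) ∂ sphμ n)⁻¹ *
    Real.exp (⟪ω, Ω⟫ / d)

noncomputable def cOne (n : ℕ) (d : ℝ) (Ω : EuclideanSpace ℝ (Fin n)) : ℝ :=
  ∫ ω : Metric.sphere (0 : EuclideanSpace ℝ (Fin n)) 1,
    VMF n d Ω ω * ⟪(ω : EuclideanSpace ℝ (Fin n)), Ω⟫ ∂ sphμ n

open Metric Real

theorem Continuous.integrable_of_compactSpace {X F : Type*} [TopologicalSpace X] [CompactSpace X]
    [MeasurableSpace X] [OpensMeasurableSpace X] [NormedAddCommGroup F] {μ : Measure X}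
    [IsFiniteMeasure μ] {f : X → F} (hf : Continuous f) : Integrable f μ :=
  hf.integrable_of_hasCompactSupport (.of_compactSpace f)

theorem Function.Odd.integral_eq_zero {α : Type*} [MeasurableSpace α] [InvolutiveNeg α]
    [MeasurableNeg α] {μ : Measure α} [μ.IsNegInvariant] {g : α → ℝ} (hg : g.Odd) :
    ∫ x, g x ∂μ = 0 := by
  have h := (Measure.measurePreserving_neg μ).integral_comp
    (MeasurableEquiv.neg α).measurableEmbedding g
  simp only [hg _, integral_neg] at h
  linarith

namespace MeasureTheory.Measure

variable {E : Type*} [NormedAddCommGroup E] [NormedSpace ℝ E] [MeasurableSpace E] [BorelSpace E]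

instance toSphere.instIsNegInvariant (μ : Measure E) [μ.IsNegInvariant] :
    μ.toSphere.IsNegInvariant := by
  constructor
  ext s hs
  have hval : ((↑) : sphere (0 : E) 1 → E) '' (-s) = -((↑) '' s) := by
    rw [← Set.image_neg_eq_neg, ← Set.image_neg_eq_neg, Set.image_image, Set.image_image]
    rfl
  rw [neg_apply, toSphere_apply' _ hs.neg, toSphere_apply' _ hs, hval, Set.smul_neg, measure_neg]

end MeasureTheory.Measure

section TiltedMean

variable {E : Type*} [NormedAddCommGroup E] [InnerProductSpace ℝ E] [FiniteDimensional ℝ E]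
  [MeasurableSpace E] [BorelSpace E] (μ : Measure (sphere (0 : E) 1)) [IsFiniteMeasure μ]
  [μ.IsOpenPosMeasure] {u : E} (d : ℝ)

theorem integral_exp_inner_div_pos (hu : ‖u‖ = 1) :
    0 < ∫ ω : sphere (0 : E) 1, exp (⟪(ω : E), u⟫ / d) ∂μ :=
  integral_pos_of_integrable_nonneg_nonzero (x := ⟨u, by simpa using hu⟩) (by fun_prop)
    (Continuous.integrable_of_compactSpace (by fun_prop))
    (fun _ ↦ (exp_pos _).le) (exp_pos _).ne'

theorem integral_exp_mul_inner_lt_integral_exp (hu : ‖u‖ = 1) :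
    ∫ ω : sphere (0 : E) 1, exp (⟪(ω : E), u⟫ / d) * ⟪(ω : E), u⟫ ∂μ <
      ∫ ω : sphere (0 : E) 1, exp (⟪(ω : E), u⟫ / d) ∂μ := by
  have hle (ω : sphere (0 : E) 1) : ⟪(ω : E), u⟫ ≤ 1 := by
    simpa [hu] using real_inner_le_norm (ω : E) u
  rw [← sub_pos, ← integral_sub (Continuous.integrable_of_compactSpace (by fun_prop))
    (Continuous.integrable_of_compactSpace (by fun_prop))]
  simp only [← mul_one_sub]
  refine integral_pos_of_integrable_nonneg_nonzero (x := ⟨-u, by simpa using hu⟩) (by fun_prop)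
    (Continuous.integrable_of_compactSpace (by fun_prop))
    (fun ω ↦ mul_nonneg (exp_pos _).le (sub_nonneg.2 (hle ω))) ?_
  simp [hu, (exp_pos _).ne']

theorem integral_exp_mul_inner_pos [μ.IsNegInvariant] (hu : ‖u‖ = 1) (hd : 0 < d) :
    0 < ∫ ω : sphere (0 : E) 1, exp (⟪(ω : E), u⟫ / d) * ⟪(ω : E), u⟫ ∂μ := by
  have hodd : Function.Odd fun ω : sphere (0 : E) 1 ↦ cosh (⟪(ω : E), u⟫ / d) * ⟪(ω : E), u⟫ :=
    fun ω ↦ by simp [coe_neg_sphere, inner_neg_left, neg_div]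
  simp only [← cosh_add_sinh, add_mul]
  rw [integral_add (Continuous.integrable_of_compactSpace (by fun_prop))
    (Continuous.integrable_of_compactSpace (by fun_prop)),
    hodd.integral_eq_zero, zero_add]
  refine integral_pos_of_integrable_nonneg_nonzero (x := ⟨u, by simpa using hu⟩) (by fun_prop)
    (Continuous.integrable_of_compactSpace (by fun_prop)) (fun ω ↦ ?_) ?_
  · rcases le_total 0 ⟪(ω : E), u⟫ with hpos | hneg
    · exact mul_nonneg (sinh_nonneg_iff.2 (div_nonneg hpos hd.le)) hpos
    · exact mul_nonneg_of_nonpos_of_nonpos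
        (sinh_nonpos_iff.2 (div_nonpos_of_nonpos_of_nonneg hneg hd.le)) hneg
  · simp [hu, hd.ne']

end TiltedMean

instance (n : ℕ) : IsFiniteMeasure (sphμ n) := by unfold sphμ; infer_instance

instance (n : ℕ) : (sphμ n).IsOpenPosMeasure := by unfold sphμ; infer_instance

instance (n : ℕ) : (sphμ n).IsNegInvariant := by unfold sphμ; infer_instance

theorem cOne_eq_div (n : ℕ) (d : ℝ) (Ω : EuclideanSpace ℝ (Fin n)) :
    cOne n d Ω =
      (∫ ω, exp (⟪(ω : EuclideanSpace ℝ (Fin n)), Ω⟫ / d) * ⟪(ω : EuclideanSpace ℝ (Fin n)), Ω⟫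
          ∂sphμ n) /
        ∫ ω, exp (⟪(ω : EuclideanSpace ℝ (Fin n)), Ω⟫ / d) ∂sphμ n := by
  simp only [cOne, VMF, mul_assoc, integral_const_mul, div_eq_inv_mul]

theorem cOne_mem_Ioo_general (n : ℕ) (d : ℝ) (hd : 0 < d)
    (Ω : EuclideanSpace ℝ (Fin n)) (hΩ : ‖Ω‖ = 1) :
    0 < cOne n d Ω ∧ cOne n d Ω < 1 := by
  have hZ := integral_exp_inner_div_pos (sphμ n) d hΩ
  rw [cOne_eq_div]
  exact ⟨div_pos (integral_exp_mul_inner_pos (sphμ n) d hΩ hd) hZ,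
    (div_lt_one hZ).2 (integral_exp_mul_inner_lt_integral_exp (sphμ n) d hΩ)⟩

/-- the order parameter of the von Mises–Fisher distribution
satisfies `0 < c₁(d) < 1` for all `d > 0`. -/
theorem cOne_mem_Ioo (n : ℕ) (hn : 2 ≤ n) (d : ℝ) (hd : 0 < d)
    (Ω : EuclideanSpace ℝ (Fin n)) (hΩ : ‖Ω‖ = 1) :
    0 < cOne n d Ω ∧ cOne n d Ω < 1 :=
  cOne_mem_Ioo_general n d hd Ω hΩ
end

section
/- The function d ↦ c_1(d) is strictly decreasing on (0, ∞). -/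
/-!
In terms of `κ = 1/d`, `c₁` is the derivative of the cumulant-generating function of `cos` under
the measure `sin^{n-2} θ dθ` on `(0, π]`. The second derivative of a cumulant-generating function
is the variance under the exponentially tilted measure, which is positive because `cos` is not
almost everywhere constant. Hence `c₁` is strictly increasing in `κ`, i.e. strictly decreasing
in `d`.
-/

open Real MeasureTheory Set ProbabilityTheory

/-- The order parameter of the von Mises–Fisher distribution on `S^{n-1}`,
expressed through the polar-angle integrals:
`c₁(d) = ∫₀^π cos θ e^{cos θ/d} sin^{n-2}θ dθ / ∫₀^π e^{cos θ/d} sin^{n-2}θ dθ`. -/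
noncomputable def cOnePolar (n : ℕ) (d : ℝ) : ℝ :=
  (∫ θ in (0:ℝ)..Real.pi,
      Real.cos θ * Real.exp (Real.cos θ / d) * Real.sin θ ^ (n - 2)) /
    (∫ θ in (0:ℝ)..Real.pi, Real.exp (Real.cos θ / d) * Real.sin θ ^ (n - 2))

namespace ProbabilityTheory

variable {Ω : Type*} [MeasurableSpace Ω] {X : Ω → ℝ} {μ : Measure Ω}

lemma iteratedDeriv_two_cgf_pos {t : ℝ} (ht : t ∈ interior (integrableExpSet X μ))
    (hX : ∀ c, ¬ X =ᵐ[μ] fun _ ↦ c) : 0 < iteratedDeriv 2 (cgf X μ) t := by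
  rw [← variance_tilted_mul ht]
  refine (variance_nonneg _ _).lt_of_ne fun h ↦ hX _ <| absolutelyContinuous_tilted
    (interior_subset (s := integrableExpSet X μ) ht)
    (ae_eq_integral_of_variance_eq_zero (memLp_tilted_mul ht 2) h.symm)

lemma strictMono_deriv_cgf (hint : integrableExpSet X μ = univ)
    (hX : ∀ c, ¬ X =ᵐ[μ] fun _ ↦ c) : StrictMono (deriv (cgf X μ)) := by
  refine strictMono_of_deriv_pos fun t ↦ ?_
  rw [← iteratedDeriv_one (f := cgf X μ), ← iteratedDeriv_succ]
  exact iteratedDeriv_two_cgf_pos (by simp [hint]) hX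

end ProbabilityTheory

/-- Up to a constant factor, the image of the surface measure of `S^{n-1}` under the angle to a
fixed pole. -/
noncomputable def polarAngleMeasure (n : ℕ) : Measure ℝ :=
  (volume.restrict (Ioc 0 π)).withDensity fun θ ↦ ENNReal.ofReal (sin θ ^ (n - 2))

section polarAngleMeasure

variable (n : ℕ)

instance isFiniteMeasure_polarAngleMeasure : IsFiniteMeasure (polarAngleMeasure n) :=
  isFiniteMeasure_withDensity_ofReal
    ((continuous_sin.pow _).integrableOn_Ioc (a := 0) (b := π)).hasFiniteIntegral

lemma integral_polarAngleMeasure (g : ℝ → ℝ) :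
    ∫ θ, g θ ∂polarAngleMeasure n = ∫ θ in 0..π, g θ * sin θ ^ (n - 2) := by
  rw [polarAngleMeasure, integral_withDensity_eq_integral_toReal_smul (by fun_prop)
    (.of_forall fun _ ↦ ENNReal.ofReal_lt_top), intervalIntegral.integral_of_le pi_pos.le]
  refine setIntegral_congr_fun measurableSet_Ioc fun θ hθ ↦ ?_
  rw [ENNReal.toReal_ofReal (pow_nonneg (sin_nonneg_of_nonneg_of_le_pi hθ.1.le hθ.2) _),
    smul_eq_mul, mul_comm]

lemma integrableExpSet_cos_polarAngleMeasure :
    integrableExpSet cos (polarAngleMeasure n) = univ := by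
  refine eq_univ_of_forall fun t ↦ Integrable.of_bound (by fun_prop) (exp |t|) (.of_forall ?_)
  intro θ
  rw [norm_of_nonneg (exp_pos _).le, exp_le_exp]
  calc t * cos θ ≤ |t * cos θ| := le_abs_self _
    _ ≤ |t| := by
      rw [abs_mul]
      exact mul_le_of_le_one_right (abs_nonneg t) (abs_cos_le_one θ)

lemma not_cos_ae_eq_const_polarAngleMeasure (c : ℝ) :
    ¬ cos =ᵐ[polarAngleMeasure n] fun _ ↦ c := by
  intro h
  rw [polarAngleMeasure, Filter.EventuallyEq, ae_withDensity_iff (by fun_prop),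
    ae_restrict_iff' measurableSet_Ioc] at h
  have hIoo : cos =ᵐ[volume.restrict (Ioo 0 π)] fun _ ↦ c := by
    rw [Filter.EventuallyEq, ae_restrict_iff' measurableSet_Ioo]
    filter_upwards [h] with θ hθ hθI
    exact hθ (Ioo_subset_Ioc_self hθI)
      (ENNReal.ofReal_pos.2 (pow_pos (sin_pos_of_pos_of_lt_pi hθI.1 hθI.2) _)).ne'
  have hcos := Measure.eqOn_open_of_ae_eq hIoo isOpen_Ioo continuous_cos.continuousOn
    continuousOn_const
  have h3 : cos (π / 3) = c := hcos ⟨by positivity, by linarith [pi_pos]⟩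
  have h2 : cos (π / 2) = c := hcos ⟨by positivity, by linarith [pi_pos]⟩
  norm_num [cos_pi_div_two, cos_pi_div_three] at h2 h3
  linarith

end polarAngleMeasure

/-- Also at `d = 0`, since `cos θ / 0 = 0 = 0⁻¹ * cos θ`. -/
lemma cOnePolar_eq_deriv_cgf (n : ℕ) (d : ℝ) :
    cOnePolar n d = deriv (cgf cos (polarAngleMeasure n)) d⁻¹ := by
  rw [deriv_cgf (by simp [integrableExpSet_cos_polarAngleMeasure]), mgf,
    integral_polarAngleMeasure, integral_polarAngleMeasure]
  simp_rw [inv_mul_eq_div]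
  rfl

theorem cOnePolar_strictAntiOn_general (n : ℕ) :
    StrictAntiOn (cOnePolar n) (Set.Ioi 0) := by
  rw [show cOnePolar n = fun d ↦ deriv (cgf cos (polarAngleMeasure n)) d⁻¹ from
    funext (cOnePolar_eq_deriv_cgf n)]
  exact (strictMono_deriv_cgf (integrableExpSet_cos_polarAngleMeasure n)
    (not_cos_ae_eq_const_polarAngleMeasure n)).comp_strictAntiOn strictAntiOn_inv_pos

/-- `d ↦ c₁(d)` is strictly decreasing on `(0, ∞)`. -/
theorem cOnePolar_strictAntiOn (n : ℕ) (hn : 2 ≤ n) :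
    StrictAntiOn (cOnePolar n) (Set.Ioi 0) :=
  cOnePolar_strictAntiOn_general n
end
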